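/- For all n ≥ 1, J_{2,n}(z,τ) = J_n(z + 1/2, τ), i.e. 2J_n(2z,2τ) - J_n(z,τ) = J_n(z + 1/2, τ). -/

import Mathlib

open Complex

noncomputable section

/-- `q = e^{2πiτ}` -/
def qq (τ : ℂ) : ℂ := Complex.exp (2 * (Real.pi : ℂ) * I * τ)

/-- `p = e^{2πiz}` -/
def pp (z : ℂ) : ℂ := Complex.exp (2 * (Real.pi : ℂ) * I * z)

/-- Deformed (twisted) Eisenstein series `J_n(z,τ)`. -/
def Jdef (n : ℕ) (z τ : ℂ) : ℂ :=
  (if n = 1 then pp z / (pp z - 1) else 0) + (bernoulli n : ℂ)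
    - n * ∑' (k : ℕ+) (r : ℕ+),
        (r : ℂ) ^ (n - 1) * ((pp z) ^ (k : ℕ) + (-1 : ℂ) ^ n * (pp z) ^ (-(k : ℤ)))
          * (qq τ) ^ ((k : ℕ) * (r : ℕ))

/-- Normalized Eisenstein series `E_{2k}`. -/
def Eis (k : ℕ) (τ : ℂ) : ℂ :=
  1 - (4 * k / (bernoulli (2 * k) : ℂ)) *
      ∑' n : ℕ+, (ArithmeticFunction.sigma (2 * k - 1) n : ℂ) * qq τ ^ (n : ℕ)

/-- Normalized differential in `z`: `(1/2πi) d/dz`. -/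
def dz (f : ℂ → ℂ) : ℂ → ℂ := fun z => (2 * (Real.pi : ℂ) * I)⁻¹ * deriv f z

/-- The first Jacobi theta function. -/
def θ₁ (z τ : ℂ) : ℂ :=
  -I * Complex.exp (2 * (Real.pi : ℂ) * I * τ / 8)
    * (Complex.exp ((Real.pi : ℂ) * I * z) - Complex.exp (-((Real.pi : ℂ) * I * z)))
    * ∏' m : ℕ+, (1 - qq τ ^ (m : ℕ)) * (1 - pp z * qq τ ^ (m : ℕ))
        * (1 - (pp z)⁻¹ * qq τ ^ (m : ℕ))

/-- The Weierstrass ℘ function as given by its Laurent series. -/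
def wp (z τ : ℂ) : ℂ :=
  ((2 * (Real.pi : ℂ) * I) ^ 2)⁻¹ *
    (1 / z ^ 2 + ∑' n : ℕ+, ((2 * (n : ℂ) + 1) * 2 * riemannZeta (2 * (n : ℕ) + 2)
        * Eis ((n : ℕ) + 1) τ * z ^ (2 * (n : ℕ))))


/-- Normalized differential in `τ`: `(1/2πi) d/dτ`. -/
def dτ' (f : ℂ → ℂ) : ℂ → ℂ := fun τ => (2 * (Real.pi : ℂ) * I)⁻¹ * deriv f τ

/-!
In terms of `p` and `q`, the substitutions act by `(p, q) ↦ (p², q²)` and `p ↦ -p`. The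
polar and Bernoulli parts satisfy the identity directly (for `n = 1` it is the partial fraction
identity `2p²/(p²-1) - p/(p-1) = p/(p+1)`). In the double series `∑ₖ ∑ᵣ`, replacing `p` by `-p`
multiplies the `k`-th column by `(-1)ᵏ`, so adding the two series kills the odd columns and
doubles the even ones, and the column `2k` of the series at `(p, q)` is the column `k` of the
series at `(p², q²)`. Absolute convergence on the annulus `|q| < |p| < |q|⁻¹` justifies the
rearrangement.
-/

lemma pp_two_mul (z : ℂ) : pp (2 * z) = pp z ^ 2 := by
  rw [pp, pp, sq, ← Complex.exp_add]; congr 1; ring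

lemma qq_two_mul (τ : ℂ) : qq (2 * τ) = qq τ ^ 2 := by
  rw [qq, qq, sq, ← Complex.exp_add]; congr 1; ring

lemma pp_add_half (z : ℂ) : pp (z + 1 / 2) = -pp z := by
  rw [pp, pp,
    show 2 * (Real.pi : ℂ) * I * (z + 1 / 2) = 2 * Real.pi * I * z + Real.pi * I by ring,
    Complex.exp_add, Complex.exp_pi_mul_I, mul_neg_one]

def jTerm (n : ℕ) (p q : ℂ) (k r : ℕ+) : ℂ :=
  (r : ℂ) ^ (n - 1) * (p ^ (k : ℕ) + (-1 : ℂ) ^ n * p ^ (-(k : ℤ))) * q ^ ((k : ℕ) * (r : ℕ))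

lemma Jdef_eq (n : ℕ) (z τ : ℂ) : Jdef n z τ = (if n = 1 then pp z / (pp z - 1) else 0)
    + (bernoulli n : ℂ) - n * ∑' (k : ℕ+) (r : ℕ+), jTerm n (pp z) (qq τ) k r :=
  rfl

lemma jTerm_neg (n : ℕ) (p q : ℂ) (k r : ℕ+) :
    jTerm n (-p) q k r = (-1) ^ (k : ℕ) * jTerm n p q k r := by
  simp only [jTerm, zpow_neg, zpow_natCast, neg_pow p, mul_inv, ← inv_pow, inv_neg, inv_one]
  ring

lemma jTerm_sq (n : ℕ) (p q : ℂ) (k r : ℕ+) :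
    jTerm n (p ^ 2) (q ^ 2) k r = jTerm n p q (2 * k) r := by
  simp only [jTerm, zpow_neg, zpow_natCast, PNat.mul_coe, PNat.val_ofNat, ← pow_mul, mul_assoc]

lemma pow_mul_pow_mul_le {x u : ℝ} (hx : 0 ≤ x) (hu0 : 0 ≤ u) (hu1 : u ≤ 1) {k r : ℕ}
    (hk : k ≠ 0) (hr : r ≠ 0) : x ^ k * u ^ (k * r) ≤ (x * u) ^ k * u ^ (r - 1) := by
  obtain ⟨s, rfl⟩ := Nat.exists_eq_add_one_of_ne_zero hr
  calc x ^ k * u ^ (k * (s + 1)) = (x * u) ^ k * u ^ (k * s) := by ring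
    _ ≤ (x * u) ^ k * u ^ s :=
      mul_le_mul_of_nonneg_left
        (pow_le_pow_of_le_one hu0 hu1 (Nat.le_mul_of_pos_left s (Nat.pos_of_ne_zero hk)))
        (by positivity)
    _ = _ := by simp

lemma norm_jTerm_le (n : ℕ) {p q : ℂ} (hq : ‖q‖ ≤ 1) (k r : ℕ+) :
    ‖jTerm n p q k r‖ ≤
      ((‖p‖ * ‖q‖) ^ (k : ℕ) + (‖p‖⁻¹ * ‖q‖) ^ (k : ℕ)) *
        ((r : ℝ) ^ (n - 1) * ‖q‖ ^ ((r : ℕ) - 1)) := by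
  have h₁ := pow_mul_pow_mul_le (norm_nonneg p) (norm_nonneg q) hq k.ne_zero r.ne_zero
  have h₂ :=
    pow_mul_pow_mul_le (inv_nonneg.2 (norm_nonneg p)) (norm_nonneg q) hq k.ne_zero r.ne_zero
  calc ‖jTerm n p q k r‖
      ≤ (r : ℝ) ^ (n - 1) * (‖p‖ ^ (k : ℕ) + ‖p‖⁻¹ ^ (k : ℕ)) * ‖q‖ ^ ((k : ℕ) * (r : ℕ)) := by
        simp only [jTerm, norm_mul, norm_pow, Complex.norm_natCast]
        gcongr
        refine (norm_add_le _ _).trans_eq ?_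
        simp [inv_pow]
    _ ≤ _ := by nlinarith [pow_nonneg (Nat.cast_nonneg (α := ℝ) (r : ℕ)) (n - 1)]

lemma summable_jTerm (n : ℕ) {p q : ℂ} (h1 : ‖q‖ < ‖p‖) (h2 : ‖p‖ < ‖q‖⁻¹) :
    Summable fun kr : ℕ+ × ℕ+ => jTerm n p q kr.1 kr.2 := by
  rcases eq_or_ne q 0 with rfl | hq₀
  · simp [jTerm, summable_zero]
  have hq : 0 < ‖q‖ := norm_pos_iff.2 hq₀
  have hq₁ : ‖q‖ < 1 := by
    by_contra! h
    linarith [h1.trans h2, inv_le_one_of_one_le₀ h]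
  have hp : 0 < ‖p‖ := hq.trans h1
  have hgeom : Summable fun k : ℕ+ => (‖p‖ * ‖q‖) ^ (k : ℕ) + (‖p‖⁻¹ * ‖q‖) ^ (k : ℕ) :=
    summable_pnat_iff_summable_nat.2 <|
      (summable_geometric_of_lt_one (by positivity)
        ((lt_mul_inv_iff₀ hq).1 (h2.trans_eq (one_mul _).symm))).add
      (summable_geometric_of_lt_one (by positivity) ((inv_mul_lt_one₀ hp).2 h1))
  have hpoly : Summable fun r : ℕ+ => (r : ℝ) ^ (n - 1) * ‖q‖ ^ ((r : ℕ) - 1) := by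
    have := (summable_pow_mul_geometric_of_norm_lt_one (n - 1)
      (by rwa [norm_norm] : ‖‖q‖‖ < 1)).mul_right ‖q‖⁻¹
    refine (summable_pnat_iff_summable_nat.2 this).congr fun r => ?_
    rw [mul_assoc, pow_sub₀ _ hq.ne' r.pos, pow_one]
  exact (hgeom.mul_of_nonneg hpoly (fun _ => by positivity) fun _ => by positivity).of_norm_bounded
    fun kr => norm_jTerm_le n hq₁.le kr.1 kr.2

lemma tsum_add_tsum_neg_one_pow_mul {g : ℕ+ → ℂ} (hg : Summable g) :
    ∑' k, g k + ∑' k : ℕ+, (-1) ^ (k : ℕ) * g k = 2 * ∑' k, g (2 * k) := by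
  have hg' : Summable fun k : ℕ+ => (-1) ^ (k : ℕ) * g k :=
    (summable_norm_iff.2 hg).of_norm_bounded fun k => by simp
  have hsupp : Function.support (fun k : ℕ+ => g k + (-1) ^ (k : ℕ) * g k) ⊆
      Set.range (2 * ·) := by
    intro k hk
    obtain ⟨m, hm⟩ : Even (k : ℕ) := by
      by_contra hodd
      exact hk (by simp [(Nat.not_even_iff_odd.1 hodd).neg_one_pow])
    have := k.pos
    exact ⟨⟨m, by omega⟩, PNat.eq <| show 2 * m = (k : ℕ) by omega⟩
  rw [← hg.tsum_add hg', ← tsum_mul_left, ← (mul_right_injective (2 : ℕ+)).tsum_eq hsupp]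
  congr 1
  ext k
  simp [two_mul]

lemma tsum_jTerm_add_tsum_jTerm_neg (n : ℕ) {p q : ℂ} (h1 : ‖q‖ < ‖p‖) (h2 : ‖p‖ < ‖q‖⁻¹) :
    ∑' (k : ℕ+) (r : ℕ+), jTerm n p q k r + ∑' (k : ℕ+) (r : ℕ+), jTerm n (-p) q k r =
      2 * ∑' (k : ℕ+) (r : ℕ+), jTerm n (p ^ 2) (q ^ 2) k r := by
  simp only [jTerm_neg, jTerm_sq, tsum_mul_left]
  exact tsum_add_tsum_neg_one_pow_mul (summable_jTerm n h1 h2).prod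

lemma two_mul_div_sq_sub_one_sub_div_sub_one {p : ℂ} (hp₁ : p ≠ 1) (hp₂ : p ≠ -1) :
    2 * (p ^ 2 / (p ^ 2 - 1)) - p / (p - 1) = -p / (-p - 1) := by
  have h₁ : p - 1 ≠ 0 := sub_ne_zero.2 hp₁
  have h₂ : p + 1 ≠ 0 := by rwa [← sub_neg_eq_add, sub_ne_zero]
  rw [show p ^ 2 - 1 = (p - 1) * (p + 1) by ring, show -p - 1 = -(p + 1) by ring]
  field_simp
  ring

theorem J_two_n_eq_shift_general (n : ℕ) (z τ : ℂ)
    (h1 : ‖qq τ‖ < ‖pp z‖)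
    (h2 : ‖pp z‖ < ‖qq τ‖⁻¹)
    (hp : n = 1 → pp z ≠ 1 ∧ pp z ≠ -1) :
    2 * Jdef n (2 * z) (2 * τ) - Jdef n z τ = Jdef n (z + 1 / 2) τ := by
  have key := tsum_jTerm_add_tsum_jTerm_neg n h1 h2
  simp only [Jdef_eq, pp_two_mul, qq_two_mul, pp_add_half]
  by_cases hn : n = 1
  · subst hn
    obtain ⟨hp₁, hp₂⟩ := hp rfl
    simp only [if_true, Nat.cast_one, one_mul]
    linear_combination two_mul_div_sq_sub_one_sub_div_sub_one hp₁ hp₂ + key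
  · simp only [if_neg hn]
    linear_combination (n : ℂ) * key

/-- `2 J_n(2z,2τ) - J_n(z,τ) = J_n(z + 1/2, τ)` for `n ≥ 1`. -/
theorem J_two_n_eq_shift (n : ℕ) (hn : 1 ≤ n) (z τ : ℂ) (hτ : 0 < τ.im)
    (h1 : ‖qq τ‖ < ‖pp z‖)
    (h2 : ‖pp z‖ < ‖qq τ‖⁻¹)
    (hp : n = 1 → pp z ≠ 1 ∧ pp z ≠ -1) :
    2 * Jdef n (2 * z) (2 * τ) - Jdef n z τ = Jdef n (z + 1 / 2) τ :=
  J_two_n_eq_shift_general n z τ h1 h2 hp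

end
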